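/- arXiv:1512.03130 — 2 statements merged into one kernel-verified Lean document; each statement's English description precedes it below -/
import Mathlib

section
/- Let A be a finite subset of a real vector space V with |A| = k ≥ 2, let S(A) be the subsemigroup of V generated by A, let K = conv(A), and let K' = conv((k-1)∗A) = (k-1)K. Then for every pair of integers r ≥ 2 and h ≥ 1 there exists a set X_{r,h} ⊆ S(h∗A) ⊆ S(A) such that |X_{r,h}| ≤ b(r,k), rhK ⊆ (1/(k-1))∗X_{r,h} + hK, and rhK' ⊆ X_{r,h} + hK'. In particular, K and K' are asymptotic (r, b(r,k))-approximate groups for all r ≥ 2. -/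
open Pointwise

/-- The `h`-fold sumset `hA = {a₁ + ⋯ + a_h : aᵢ ∈ A}`. -/
def hsum {V : Type*} [AddCommMonoid V] (h : ℕ) (A : Set V) : Set V :=
  {z | ∃ f : Fin h → V, (∀ i, f i ∈ A) ∧ z = ∑ i, f i}

/-- The subsemigroup `S(A) = ⋃_{h ≥ 1} hA` generated by `A`. -/
def semigroupGen {V : Type*} [AddCommMonoid V] (A : Set V) : Set V :=
  ⋃ h ∈ Set.Ici (1 : ℕ), hsum h A

/-- The binomial coefficient `b(r,k) = C((r+1)(k-1)-1, k-1)`. -/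
def b (r k : ℕ) : ℕ := Nat.choose ((r + 1) * (k - 1) - 1) (k - 1)

/-! A point of `r • conv A` is `∑ cₐ • a` with `cₐ ≥ 0` and `∑ cₐ = r`. The integers
`⌊(k - 1) cₐ⌋` sum to more than `(k - 1) r - k`, so there are `nₐ ≤ ⌊(k - 1) cₐ⌋` with
`∑ nₐ = (r - 1)(k - 1)`, and then
`∑ cₐ • a = (k - 1)⁻¹ • ∑ nₐ • a + ∑ (cₐ - nₐ / (k - 1)) • a`, the last sum lying in `conv A`.
So `r • conv A ⊆ (k - 1)⁻¹ • X + conv A` for the set `X` of `(r - 1)(k - 1)`-fold sums of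
elements of `A`, which has at most `C(r(k - 1), k - 1)` elements by stars and bars. Since
`h`-fold sums of a convex set are its dilations by `h`, scaling by `h` and by `k - 1` gives the
theorem. -/

section Sumsets
variable {V : Type*} [AddCommMonoid V]

lemma hsum_eq_nsmul (n : ℕ) (S : Set V) : hsum n S = n • S := by
  ext x
  rw [Set.mem_nsmul]
  constructor
  · rintro ⟨f, hf, rfl⟩
    exact ⟨fun i => ⟨f i, hf i⟩, by simp [List.sum_ofFn]⟩
  · rintro ⟨f, rfl⟩
    exact ⟨fun i => f i, fun i => (f i).2, by simp [List.sum_ofFn]⟩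

lemma hsum_smul_set {M : Type*} [Monoid M] [DistribMulAction M V] (c : M) (n : ℕ) (S : Set V) :
    hsum n (c • S) = c • hsum n S := by
  rw [hsum_eq_nsmul, hsum_eq_nsmul, smul_comm]

lemma nsmul_subset_semigroupGen {n : ℕ} (hn : 1 ≤ n) (S : Set V) :
    n • S ⊆ semigroupGen S := by
  rw [← hsum_eq_nsmul]
  exact Set.subset_biUnion_of_mem (u := fun n => hsum n S) hn

lemma semigroupGen_subset_of_subset_nsmul {S T : Set V} {h : ℕ} (hh : 1 ≤ h)
    (hT : T ⊆ h • S) : semigroupGen T ⊆ semigroupGen S :=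
  Set.iUnion₂_subset fun n hn => by
    rw [hsum_eq_nsmul]
    calc n • T ⊆ n • h • S := Set.nsmul_subset_nsmul_left hT
      _ = (h * n) • S := (mul_nsmul S h n).symm
      _ ⊆ semigroupGen S := nsmul_subset_semigroupGen (Nat.mul_pos hh hn) S

lemma semigroupGen_natCast_smul_subset {R : Type*} [Semiring R] [Module R V] {h : ℕ}
    (hh : 1 ≤ h) (S : Set V) : semigroupGen ((h : R) • S) ⊆ semigroupGen S := by
  refine semigroupGen_subset_of_subset_nsmul hh ?_
  rintro _ ⟨a, ha, rfl⟩
  simpa only [Nat.cast_smul_eq_nsmul] using Set.nsmul_mem_nsmul (n := h) ha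

end Sumsets

lemma Convex.nsmul_eq_natCast_smul {𝕜 E : Type*} [Field 𝕜] [LinearOrder 𝕜] [IsStrictOrderedRing 𝕜]
    [AddCommGroup E] [Module 𝕜 E] {K : Set E} (hK : Convex 𝕜 K) (hne : K.Nonempty) :
    ∀ n : ℕ, n • K = (n : 𝕜) • K
  | 0 => by rw [zero_nsmul, Nat.cast_zero, Set.zero_smul_set hne]
  | n + 1 => by
    rw [succ_nsmul, hK.nsmul_eq_natCast_smul hne n, Nat.cast_succ,
      hK.add_smul (Nat.cast_nonneg n) zero_le_one, one_smul]

lemma Finset.exists_mem_finsuppAntidiag_le {ι : Type*} [DecidableEq ι] (s : Finset ι)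
    (q : ι → ℕ) {m : ℕ} (hm : m ≤ ∑ i ∈ s, q i) :
    ∃ n ∈ s.finsuppAntidiag m, ∀ i ∈ s, n i ≤ q i := by
  induction s using Finset.induction_on generalizing m with
  | empty => exact ⟨0, by simp_all, by simp⟩
  | insert a s ha ih =>
    rw [Finset.sum_insert ha] at hm
    obtain ⟨n, hn, hnq⟩ := ih (m := m - min m (q a)) (by omega)
    refine ⟨Finsupp.update n a (min m (q a)),
      (mem_finsuppAntidiag_insert ha m).2 ⟨(min m (q a), m - min m (q a)), by simp, n, rfl, hn⟩,
      fun i hi => ?_⟩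
    rcases eq_or_ne i a with rfl | hia
    · simp
    · rw [Finsupp.update_apply, if_neg hia]
      exact hnq i ((Finset.mem_insert.1 hi).resolve_left hia)

lemma Finset.exists_mem_finsuppAntidiag_natCast_le {ι : Type*} [DecidableEq ι] {s : Finset ι}
    {c : ι → ℝ} (hc : ∀ i ∈ s, 0 ≤ c i) {r : ℕ} (hr : 1 ≤ r) (hcs : ∑ i ∈ s, c i = r) :
    ∃ n ∈ s.finsuppAntidiag ((r - 1) * (s.card - 1)),
      ∀ i ∈ s, (n i : ℝ) ≤ ((s.card : ℝ) - 1) * c i := by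
  have hne : s.Nonempty := Finset.nonempty_of_sum_ne_zero (by rw [hcs]; positivity)
  have hk : 1 ≤ s.card := hne.card_pos
  set q : ι → ℕ := fun i => ⌊((s.card : ℝ) - 1) * c i⌋₊
  have hq : (((s.card - 1) * r : ℕ) : ℝ) < ∑ i ∈ s, q i + s.card := by
    calc (((s.card - 1) * r : ℕ) : ℝ) = ∑ i ∈ s, ((s.card : ℝ) - 1) * c i := by
          rw [← Finset.mul_sum, hcs]; push_cast [Nat.cast_sub hk]; ring
      _ < ∑ i ∈ s, ((q i : ℝ) + 1) :=
          Finset.sum_lt_sum_of_nonempty hne fun i _ => Nat.lt_floor_add_one _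
      _ = ∑ i ∈ s, q i + s.card := by simp [Finset.sum_add_distrib]
  have hm : (r - 1) * (s.card - 1) ≤ ∑ i ∈ s, q i := by
    have := (Nat.cast_lt (α := ℝ)).1 (by exact_mod_cast hq)
    obtain ⟨r, rfl⟩ := Nat.exists_eq_add_of_le' hr
    obtain ⟨k, hk⟩ := Nat.exists_eq_add_of_le' hk
    rw [hk] at this ⊢
    simp only [Nat.add_sub_cancel] at this ⊢
    nlinarith
  obtain ⟨n, hn, hnq⟩ := s.exists_mem_finsuppAntidiag_le q hm
  refine ⟨n, hn, fun i hi => (Nat.cast_le.2 (hnq i hi)).trans (Nat.floor_le ?_)⟩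
  exact mul_nonneg (by simpa using hk) (hc i hi)

section SumsOfCard
variable {V : Type*} [AddCommMonoid V] [DecidableEq V]

/-- The `m`-fold sumset of `s`, indexed by multiplicity vectors so that its size is bounded by
stars and bars. -/
def sumsOfCard (s : Finset V) (m : ℕ) : Finset V :=
  (s.finsuppAntidiag m).image fun n => ∑ a ∈ s, n a • a

lemma card_sumsOfCard_le (s : Finset V) (m : ℕ) :
    (sumsOfCard s m).card ≤ (s.card + m - 1).choose m :=
  Finset.card_image_le.trans_eq (Finset.card_finsuppAntidiag_nat_eq_choose m)

lemma coe_sumsOfCard_subset_nsmul (s : Finset V) (m : ℕ) :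
    (sumsOfCard s m : Set V) ⊆ m • (s : Set V) := by
  intro x hx
  obtain ⟨n, hn, rfl⟩ := Finset.mem_image.1 hx
  rw [← (Finset.mem_finsuppAntidiag.1 hn).1, ← Finset.sum_nsmul_assoc]
  exact Set.finsetSum_mem_finsetSum s _ _ fun a ha => Set.nsmul_mem_nsmul ha

lemma smul_sumsOfCard_subset_semigroupGen {M : Type*} [Monoid M] [DistribMulAction M V]
    (c : M) (s : Finset V) {m : ℕ} (hm : 1 ≤ m) :
    c • (sumsOfCard s m : Set V) ⊆ semigroupGen (c • (s : Set V)) :=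
  calc c • (sumsOfCard s m : Set V) ⊆ c • (m • (s : Set V)) :=
        Set.smul_set_mono (coe_sumsOfCard_subset_nsmul s m)
    _ = m • (c • (s : Set V)) := smul_comm _ _ _
    _ ⊆ _ := nsmul_subset_semigroupGen hm _

end SumsOfCard

section Polytope
variable {V : Type*} [AddCommGroup V] [Module ℝ V] [DecidableEq V]

lemma natCast_smul_convexHull_subset (s : Finset V) {r : ℕ} (hr : 1 ≤ r) (hs : 2 ≤ s.card) :
    (r : ℝ) • convexHull ℝ (s : Set V) ⊆
      ((s.card : ℝ) - 1)⁻¹ • (sumsOfCard s ((r - 1) * (s.card - 1)) : Set V) +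
        convexHull ℝ (s : Set V) := by
  rintro _ ⟨y, hy, rfl⟩
  obtain ⟨w, hw0, hw1, rfl⟩ := Finset.mem_convexHull'.1 hy
  set c : ℝ := (s.card : ℝ) - 1
  have hc : 0 < c := sub_pos.2 (by norm_cast)
  obtain ⟨n, hn, hnw⟩ := s.exists_mem_finsuppAntidiag_natCast_le (c := fun a => r * w a)
    (fun a ha => mul_nonneg r.cast_nonneg (hw0 a ha)) hr (by rw [← Finset.mul_sum, hw1, mul_one])
  have hnsum : ∑ a ∈ s, (n a : ℝ) = (r - 1) * c := by
    rw [← Nat.cast_sum, (Finset.mem_finsuppAntidiag.1 hn).1]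
    push_cast [Nat.cast_sub hr, Nat.cast_sub (by omega : 1 ≤ s.card)]
    rfl
  refine Set.mem_add.2 ⟨c⁻¹ • ∑ a ∈ s, n a • a,
    Set.smul_mem_smul_set (Finset.mem_image_of_mem _ hn),
    ∑ a ∈ s, (r * w a - n a / c) • a, Finset.mem_convexHull'.2 ⟨_, fun a ha => ?_, ?_, rfl⟩, ?_⟩
  · rw [sub_nonneg, div_le_iff₀ hc, mul_comm _ c]
    exact hnw a ha
  · rw [Finset.sum_sub_distrib, ← Finset.mul_sum, hw1, ← Finset.sum_div, hnsum]
    field_simp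
    ring
  · simp only [Finset.smul_sum, ← Finset.sum_add_distrib, ← Nat.cast_smul_eq_nsmul ℝ, smul_smul,
      ← add_smul]
    refine Finset.sum_congr rfl fun a _ => congrArg (· • a) ?_
    field_simp
    ring

lemma hsum_mul_convexHull_subset (s : Finset V) {r : ℕ} (hr : 1 ≤ r) (hs : 2 ≤ s.card)
    (h : ℕ) :
    hsum (r * h) (convexHull ℝ (s : Set V)) ⊆
      ((s.card : ℝ) - 1)⁻¹ • ((h : ℝ) • (sumsOfCard s ((r - 1) * (s.card - 1)) : Set V)) +
        hsum h (convexHull ℝ (s : Set V)) := by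
  have hne : (convexHull ℝ (s : Set V)).Nonempty :=
    convexHull_nonempty_iff.2 (Finset.card_pos.1 (by omega))
  simp only [hsum_eq_nsmul, (convex_convexHull ℝ _).nsmul_eq_natCast_smul hne]
  rw [Nat.cast_mul, mul_comm, mul_smul, smul_comm _ (h : ℝ), ← smul_add]
  exact Set.smul_set_mono (natCast_smul_convexHull_subset s hr hs)

end Polytope

lemma smul_subset_add_smul_of_subset_inv_smul_add {𝕜 V : Type*} [DivisionRing 𝕜]
    [AddCommGroup V] [Module 𝕜 V] {T X U : Set V} {c : 𝕜} (hc : c ≠ 0)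
    (h : T ⊆ c⁻¹ • X + U) : c • T ⊆ X + c • U :=
  calc c • T ⊆ c • (c⁻¹ • X + U) := Set.smul_set_mono h
    _ = X + c • U := by rw [smul_add, smul_inv_smul₀ hc]

lemma choose_le_b {r k : ℕ} (hr : 1 ≤ r) (hk : 2 ≤ k) :
    (k + (r - 1) * (k - 1) - 1).choose ((r - 1) * (k - 1)) ≤ b r k := by
  obtain ⟨r, rfl⟩ := Nat.exists_eq_add_of_le' hr
  obtain ⟨k, rfl⟩ := Nat.exists_eq_add_of_le' hk
  simp only [b, Nat.add_sub_cancel, show k + 2 - 1 = k + 1 by omega]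
  rw [show k + 2 + r * (k + 1) - 1 = r * (k + 1) + (k + 1) by omega, Nat.choose_symm_add]
  refine Nat.choose_le_choose _ ?_
  have : (r + 1 + 1) * (k + 1) = r * (k + 1) + (k + 1) + (k + 1) := by ring
  omega

/-- Let `A` be a finite subset of a real vector space with `|A| = k ≥ 2`, `K = conv(A)`,
`K' = conv((k-1) ∗ A)`.  For all integers `r ≥ 2`, `h ≥ 1` there is
`X_{r,h} ⊆ S(h ∗ A) ⊆ S(A)` with `|X_{r,h}| ≤ b(r,k)`,
`rhK ⊆ (1/(k-1)) ∗ X_{r,h} + hK` and `rhK' ⊆ X_{r,h} + hK'`.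
In particular, `K` and `K'` are asymptotic `(r, b(r,k))`-approximate groups. -/
theorem polytope_asymptotic_approximate_group {V : Type*} [AddCommGroup V] [Module ℝ V]
    (A : Set V) (hA : A.Finite) (k : ℕ) (hk : A.ncard = k) (hk2 : 2 ≤ k)
    (K K' : Set V) (hK : K = convexHull ℝ A)
    (hK' : K' = convexHull ℝ ((fun x => ((k : ℝ) - 1) • x) '' A)) :
    (∀ r h : ℕ, 2 ≤ r → 1 ≤ h →
      ∃ X : Finset V,
        (↑X : Set V) ⊆ semigroupGen ((fun x => (h : ℝ) • x) '' A) ∧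
        semigroupGen ((fun x => (h : ℝ) • x) '' A) ⊆ semigroupGen A ∧
        X.card ≤ b r k ∧
        hsum (r * h) K ⊆ (fun x => ((k : ℝ) - 1)⁻¹ • x) '' (↑X : Set V) + hsum h K ∧
        hsum (r * h) K' ⊆ ↑X + hsum h K') ∧
    (∀ r : ℕ, 2 ≤ r → ∃ h₀ : ℕ, ∀ h : ℕ, h₀ ≤ h →
      ∃ Y : Finset V, Y.card ≤ b r k ∧ hsum (r * h) K ⊆ ↑Y + hsum h K) ∧
    (∀ r : ℕ, 2 ≤ r → ∃ h₀ : ℕ, ∀ h : ℕ, h₀ ≤ h →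
      ∃ Y : Finset V, Y.card ≤ b r k ∧ hsum (r * h) K' ⊆ ↑Y + hsum h K') := by
  classical
  obtain ⟨s, rfl⟩ : ∃ s : Finset V, ↑s = A := ⟨hA.toFinset, hA.coe_toFinset⟩
  rw [Set.ncard_coe_finset] at hk
  subst hk hK hK'
  have hc : ((s.card : ℝ) - 1) ≠ 0 := sub_ne_zero.2 (by norm_cast; omega)
  set X : ℕ → ℕ → Finset V := fun r h => (h : ℝ) • sumsOfCard s ((r - 1) * (s.card - 1))
  have hXcard (r h : ℕ) (hr : 2 ≤ r) : (X r h).card ≤ b r s.card :=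
    Finset.card_smul_finset_le.trans ((card_sumsOfCard_le _ _).trans (choose_le_b (by omega) hk2))
  have hKX (r h : ℕ) (hr : 2 ≤ r) : hsum (r * h) (convexHull ℝ (s : Set V)) ⊆
      ((s.card : ℝ) - 1)⁻¹ • (X r h : Set V) + hsum h (convexHull ℝ (s : Set V)) := by
    rw [Finset.coe_smul_finset]
    exact hsum_mul_convexHull_subset s (by omega) hk2 h
  have hK'X (r h : ℕ) (hr : 2 ≤ r) :
      hsum (r * h) (convexHull ℝ (((s.card : ℝ) - 1) • (s : Set V))) ⊆
        (X r h : Set V) + hsum h (convexHull ℝ (((s.card : ℝ) - 1) • (s : Set V))) := by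
    rw [convexHull_smul, hsum_smul_set, hsum_smul_set]
    exact smul_subset_add_smul_of_subset_inv_smul_add hc (hKX r h hr)
  simp only [Set.image_smul]
  refine ⟨fun r h hr hh => ⟨X r h, ?_, semigroupGen_natCast_smul_subset hh _, hXcard r h hr,
      hKX r h hr, hK'X r h hr⟩,
    fun r hr => ⟨0, fun h _ => ⟨((s.card : ℝ) - 1)⁻¹ • X r h,
      Finset.card_smul_finset_le.trans (hXcard r h hr), by
      rw [Finset.coe_smul_finset]; exact hKX r h hr⟩⟩,
    fun r hr => ⟨0, fun h _ => ⟨X r h, hXcard r h hr, hK'X r h hr⟩⟩⟩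
  rw [Finset.coe_smul_finset]
  exact smul_sumsOfCard_subset_semigroupGen _ s (Nat.mul_pos (by omega) (by omega))
end

section
/- Let n be a positive integer and let A be a finite subset of the lattice ℤ^n with |A| = k ≥ 2. Then for every integer r ≥ 2, the set A is an asymptotic (r, k·b(r,k))-approximate group in ℤ^n: there exists an integer h_0 such that for every h ≥ h_0 there is a set Y ⊆ ℤ^n with |Y| ≤ k·b(r,k) and rhA ⊆ Y + hA. -/
/-!
Write an element of `rhA`, for `A = {a₀, …, a_m}` with `m = k - 1`, as `∑ uᵢ • aᵢ` with
`∑ uᵢ = rh`, and put `g = ⌊h / m⌋`. Let `j` maximise `uⱼ`, so that `uⱼ ≥ g`. Rounding the other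
coordinates down to multiples `g • xᵢ ≤ uᵢ` and filling up coordinate `j` gives a tuple `c ≤ u`
with `∑ c = (r - 1)h`, hence `∑ uᵢ • aᵢ = ∑ cᵢ • aᵢ + ∑ (uᵢ - cᵢ) • aᵢ ∈ Y + hA`.
Since `g ∑ xᵢ ≤ (r - 1)h < rmg`, the tuple `x` has sum at most `rm - 1`, and by stars and bars
there are at most `k · C(rm - 1 + m, m) = k · b(r, k)` pairs `(j, x)`.
-/

open Pointwise

open Finset

section Sumset

variable {V : Type*} [AddCommMonoid V] {A : Set V}

lemma add_mem_hsum {p q : ℕ} {x y : V} (hx : x ∈ hsum p A) (hy : y ∈ hsum q A) :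
    x + y ∈ hsum (p + q) A := by
  obtain ⟨f, hf, rfl⟩ := hx
  obtain ⟨g, hg, rfl⟩ := hy
  refine ⟨Fin.append f g, Fin.addCases (by simpa using hf) (by simpa using hg), ?_⟩
  simp [Fin.sum_univ_add]

lemma sum_nsmul_mem_hsum {ι : Type*} {a : ι → V} (ha : ∀ i, a i ∈ A) (u : ι → ℕ)
    (s : Finset ι) : ∑ i ∈ s, u i • a i ∈ hsum (∑ i ∈ s, u i) A := by
  classical
  induction s using Finset.induction_on with
  | empty =>
    rw [sum_empty, sum_empty]
    exact ⟨Fin.elim0, fun i => i.elim0, by simp⟩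
  | insert i s hi ih =>
    rw [sum_insert hi, sum_insert hi]
    exact add_mem_hsum ⟨fun _ => a i, fun _ => ha i, by simp⟩ ih

lemma exists_sum_nsmul_eq_of_mem_hsum {ι : Type*} [Fintype ι] {a : ι → V}
    (hA : A ⊆ Set.range a) {m : ℕ} {z : V} (hz : z ∈ hsum m A) :
    ∃ u : ι → ℕ, ∑ i, u i = m ∧ z = ∑ i, u i • a i := by
  classical
  obtain ⟨f, hf, rfl⟩ := hz
  choose φ hφ using fun l => hA (hf l)
  refine ⟨fun i => #{l | φ l = i}, ?_, ?_⟩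
  · simpa using (card_eq_sum_card_fiberwise (s := univ) fun l _ => mem_univ (φ l)).symm
  · rw [← sum_fiberwise_of_maps_to (fun l _ => mem_univ (φ l)) f]
    refine sum_congr rfl fun i _ => ?_
    rw [sum_congr rfl fun l hl => (hφ l).symm.trans (congrArg a (mem_filter.mp hl).2), sum_const]

end Sumset

lemma Finset.card_piAntidiag_nat {ι : Type*} [DecidableEq ι] (s : Finset ι) (n : ℕ) :
    #(piAntidiag s n) = (#s + n - 1).choose n := by
  rw [← card_finsuppAntidiag_nat_eq_choose, finsuppAntidiag, card_map, card_attach]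

lemma exists_le_sum_eq {ι : Type*} [Fintype ι] (w : ι → ℕ) {t : ℕ} (ht : t ≤ ∑ i, w i) :
    ∃ x ≤ w, ∑ i, x i = t := by
  obtain ⟨x, hxw, hx⟩ := Finsupp.exists_le_degree_eq (Finsupp.equivFunOnFinite.symm w) t
    (by rwa [Finsupp.degree_eq_sum])
  exact ⟨x, fun i => hxw i, by rw [← Finsupp.degree_eq_sum, hx]⟩

lemma exists_nsmul_le_with_sum_near {ι : Type*} [Fintype ι] (w : ι → ℕ) {a g q : ℕ}
    (hg : 0 < g) (hga : g ≤ a) (hq : q + Fintype.card ι * g ≤ a + ∑ i, w i) :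
    ∃ x : ι → ℕ, g • x ≤ w ∧ g * ∑ i, x i ≤ q ∧ q ≤ a + g * ∑ i, x i := by
  obtain ⟨x, hxw, hx⟩ := exists_le_sum_eq (fun i => w i / g)
    (min_le_right (q / g) (∑ i, w i / g))
  refine ⟨x, fun i => (Nat.mul_le_mul_left g (hxw i)).trans (Nat.mul_div_le (w i) g), ?_, ?_⟩
  · rw [hx]
    exact (Nat.mul_le_mul_left g (min_le_left _ _)).trans (Nat.mul_div_le q g)
  · rw [hx]
    rcases min_cases (q / g) (∑ i, w i / g) with ⟨hmin, -⟩ | ⟨hmin, -⟩ <;> rw [hmin]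
    · have := Nat.lt_mul_div_succ q hg
      rw [mul_add_one] at this
      omega
    · have : ∑ i, w i ≤ g * ∑ i, w i / g + Fintype.card ι * g := by
        calc ∑ i, w i ≤ ∑ i, (g * (w i / g) + g) :=
              sum_le_sum fun i _ => by simpa [mul_add_one] using (Nat.lt_mul_div_succ (w i) hg).le
          _ = _ := by rw [sum_add_distrib, ← mul_sum, sum_const, card_univ, smul_eq_mul]
      omega

section Profile

variable (g q : ℕ) {m : ℕ}

def profile (j : Fin (m + 1)) (x : Fin m → ℕ) : Fin (m + 1) → ℕ :=
  Fin.insertNth j (q - g * ∑ i, x i) (g • x)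

lemma sum_profile {j : Fin (m + 1)} {x : Fin m → ℕ} (hx : g * ∑ i, x i ≤ q) :
    ∑ i, profile g q j x i = q := by
  rw [Fin.sum_univ_succAbove _ j]
  simp only [profile, Fin.insertNth_apply_same, Fin.insertNth_apply_succAbove, Pi.smul_apply,
    smul_eq_mul, ← mul_sum]
  omega

lemma exists_profile_le {n : ℕ} (u : Fin (m + 1) → ℕ) (hu : ∑ i, u i = n) (hg : 0 < g)
    (hgn : (m + 1) * g ≤ n) (hq : q + m * g ≤ n) :
    ∃ j x, profile g q j x ≤ u ∧ g * ∑ i, x i ≤ q := by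
  obtain ⟨j, -, hj⟩ := exists_max_image univ u univ_nonempty
  have hgj : g ≤ u j := by
    have : n ≤ (m + 1) * u j := hu ▸ (sum_le_sum fun i _ => hj i (mem_univ i)).trans (by simp)
    exact Nat.le_of_mul_le_mul_left (hgn.trans this) m.succ_pos
  have hu_split : ∑ i, u i = u j + ∑ i, u (j.succAbove i) := Fin.sum_univ_succAbove u j
  obtain ⟨x, hxu, hxq, hqx⟩ := exists_nsmul_le_with_sum_near (u ∘ j.succAbove) hg hgj
    (q := q) (by rw [Fintype.card_fin]; simp only [Function.comp_apply]; omega)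
  exact ⟨j, x, Fin.insertNth_le_iff.mpr ⟨by omega, hxu⟩, hxq⟩

variable (m) in
def profiles (N : ℕ) : Finset (Fin (m + 1) → ℕ) :=
  (univ ×ˢ piAntidiag univ N).image fun p => profile g q p.1 (Fin.tail p.2)

lemma card_profiles_le (N : ℕ) : #(profiles g q m N) ≤ (m + 1) * (N + m).choose m := by
  calc #(profiles g q m N) ≤ #(univ ×ˢ piAntidiag (univ : Finset (Fin (m + 1))) N) :=
        card_image_le
    _ = (m + 1) * (N + m).choose m := by
        rw [card_product, card_piAntidiag_nat, card_univ, Fintype.card_fin,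
          show m + 1 + N - 1 = N + m by omega, Nat.choose_symm_add]

lemma profile_mem_profiles {N : ℕ} {j : Fin (m + 1)} {x : Fin m → ℕ} (hx : ∑ i, x i ≤ N) :
    profile g q j x ∈ profiles g q m N :=
  mem_image.mpr ⟨(j, Fin.cons (N - ∑ i, x i) x),
    mem_product.2 ⟨mem_univ j,
      mem_piAntidiag.2 ⟨by rw [Fin.sum_cons]; omega, fun _ _ => mem_univ _⟩⟩,
    by simp⟩

end Profile

theorem exists_small_finset_below_tuples_of_sum {r m h : ℕ} (hr : 2 ≤ r) (hm : 0 < m)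
    (hh : r * m ≤ h) :
    ∃ C : Finset (Fin (m + 1) → ℕ), #C ≤ (m + 1) * b r (m + 1) ∧
      ∀ u : Fin (m + 1) → ℕ, ∑ i, u i = r * h → ∃ c ∈ C, c ≤ u ∧ ∑ i, c i + h = r * h := by
  set g := h / m
  have hrg : r ≤ g := (Nat.le_div_iff_mul_le hm).2 hh
  have hgh : m * g ≤ h := Nat.mul_div_le h m
  have hhg : h < m * (g + 1) := Nat.lt_mul_div_succ h hm
  have hrh : (r - 1) * h + h = r * h := by rw [← add_one_mul, Nat.sub_add_cancel (by omega)]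
  refine ⟨profiles g ((r - 1) * h) m (r * m - 1), ?_, fun u hu => ?_⟩
  · convert card_profiles_le g ((r - 1) * h) (m := m) (r * m - 1) using 3
    have : 0 < r * m := Nat.mul_pos (by omega) hm
    rw [b, Nat.add_sub_cancel, add_one_mul]
    congr 1
    omega
  · obtain ⟨j, x, hxu, hxq⟩ := exists_profile_le g ((r - 1) * h) u hu (by omega)
      (by nlinarith) (by omega)
    have hx : ∑ i, x i < r * m := by
      refine Nat.lt_of_mul_lt_mul_left (a := g) (hxq.trans_lt ?_)
      nlinarith
    exact ⟨_, profile_mem_profiles g _ (Nat.le_sub_one_of_lt hx), hxu,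
      by rw [sum_profile g _ hxq, hrh]⟩

lemma hsum_subset_image_add_hsum {V ι : Type*} [AddCommMonoid V] [DecidableEq V] [Fintype ι]
    {A : Set V} {a : ι → V} (ha : Set.range a = A) {n q : ℕ} (C : Finset (ι → ℕ))
    (hC : ∀ u : ι → ℕ, ∑ i, u i = n → ∃ c ∈ C, c ≤ u ∧ ∑ i, c i + q = n) :
    hsum n A ⊆ ↑(C.image fun c => ∑ i, c i • a i) + hsum q A := by
  intro z hz
  obtain ⟨u, hu, rfl⟩ := exists_sum_nsmul_eq_of_mem_hsum ha.ge hz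
  obtain ⟨c, hcC, hcu, hc⟩ := hC u hu
  have hsplit : ∑ i, u i • a i = ∑ i, c i • a i + ∑ i, (u i - c i) • a i := by
    rw [← sum_add_distrib]
    exact sum_congr rfl fun i _ => by rw [← add_smul, Nat.add_sub_cancel' (hcu i)]
  have hrest : ∑ i, (u i - c i) = q := by
    rw [sum_tsub_distrib _ fun i _ => hcu i]
    omega
  rw [hsplit]
  refine Set.add_mem_add (mem_coe.2 (mem_image_of_mem _ hcC)) ?_
  exact hrest ▸ sum_nsmul_mem_hsum (fun i => ha ▸ ⟨i, rfl⟩) _ univ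

theorem lattice_asymptotic_approximate_group_general (n : ℕ)
    (A : Set (Fin n → ℤ)) (hA : A.Finite) (k : ℕ) (hk : A.ncard = k) (hk2 : 2 ≤ k)
    (r : ℕ) (hr : 2 ≤ r) :
    ∃ h₀ : ℕ, ∀ h : ℕ, h₀ ≤ h →
      ∃ Y : Finset (Fin n → ℤ), Y.card ≤ k * b r k ∧
        hsum (r * h) A ⊆ ↑Y + hsum h A := by
  obtain ⟨k', a, ha_inj, rfl⟩ := hA.fin_param
  rw [Set.ncard_range_of_injective ha_inj, Nat.card_fin] at hk
  subst hk
  obtain ⟨m, rfl⟩ : ∃ m, k' = m + 1 := ⟨k' - 1, by omega⟩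
  refine ⟨r * m, fun h hh => ?_⟩
  obtain ⟨C, hC_card, hC⟩ := exists_small_finset_below_tuples_of_sum hr (by omega) hh
  exact ⟨_, card_image_le.trans hC_card, hsum_subset_image_add_hsum rfl C hC⟩

/-- Every finite set `A` of `k ≥ 2` lattice points in `ℤⁿ` is an asymptotic
`(r, k·b(r,k))`-approximate group for every `r ≥ 2`. -/
theorem lattice_asymptotic_approximate_group (n : ℕ) (hn : 0 < n)
    (A : Set (Fin n → ℤ)) (hA : A.Finite) (k : ℕ) (hk : A.ncard = k) (hk2 : 2 ≤ k)
    (r : ℕ) (hr : 2 ≤ r) :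
    ∃ h₀ : ℕ, ∀ h : ℕ, h₀ ≤ h →
      ∃ Y : Finset (Fin n → ℤ), Y.card ≤ k * b r k ∧
        hsum (r * h) A ⊆ ↑Y + hsum h A :=
  lattice_asymptotic_approximate_group_general n A hA k hk hk2 r hr
end
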